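/- arXiv:1902.04650 — 2 statements merged into one kernel-verified Lean document; each statement's English description precedes it below -/
import Mathlib

section
/- In the adversarial contamination setup, for every triple of positive integers (k,s,n) with 1 ≤ s ≤ k and every ε ∈ [0,1], the sample mean satisfies E[d_H(X̄_n, θ*)] ≤ (s/n)^{1/2} + 2 ε^{1/2}. -/
open MeasureTheory ProbabilityTheory

noncomputable section

/-- The probability simplex `Δ^{k-1}` in `ℝ^k`. -/
def simplex (k : ℕ) : Set (Fin k → ℝ) :=
  {v | (∀ j, 0 ≤ v j) ∧ ∑ j, v j = 1}

/-- `v` has at most `s` nonzero coordinates. -/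
def sparse {k : ℕ} (s : ℕ) (v : Fin k → ℝ) : Prop :=
  (Finset.univ.filter fun j => v j ≠ 0).card ≤ s

/-- Hellinger distance between two points of the simplex. -/
def dH {k : ℕ} (u v : Fin k → ℝ) : ℝ :=
  Real.sqrt (∑ j, (Real.sqrt (u j) - Real.sqrt (v j)) ^ 2)

/-! By the triangle inequality `d_H(X̄, θ) ≤ d_H(Ȳ, θ) + d_H(X̄, Ȳ)`, with `Ȳ` the clean mean.
`X̄` differs from `Ȳ` in at most `εn` of the `n` summands, each of which moves it by at most `2/n`
in `ℓ¹`; since `d_H² ≤ ‖·‖₁` this costs at most `√(2ε)`.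
For the clean mean, `(√a - √b)² ≤ (a - b)² / b` bounds the expected squared Hellinger error in
coordinate `j` by `Var(Ȳ_j) / θ_j ≤ 1/n`, and only the at most `s` coordinates in the support
of `θ` contribute; Jensen's inequality `E d_H ≤ (E d_H²)^{1/2}` then gives `√(s/n)`. -/

open Finset

lemma sqrt_sub_sqrt_sq_le_abs_sub {a b : ℝ} (ha : 0 ≤ a) (hb : 0 ≤ b) :
    (√a - √b) ^ 2 ≤ |a - b| := by
  rcases abs_cases (a - b) with ⟨h, _⟩ | ⟨h, _⟩ <;> rw [h] <;>
    nlinarith [Real.sq_sqrt ha, Real.sq_sqrt hb, Real.sqrt_nonneg a, Real.sqrt_nonneg b,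
      mul_nonneg (Real.sqrt_nonneg a) (Real.sqrt_nonneg b)]

lemma sqrt_sub_sqrt_sq_le_sq_div {a b : ℝ} (ha : 0 ≤ a) (hb : 0 < b) :
    (√a - √b) ^ 2 ≤ (a - b) ^ 2 / b := by
  have hab : a - b = (√a - √b) * (√a + √b) := by
    ring_nf; rw [Real.sq_sqrt ha, Real.sq_sqrt hb.le]
  rw [le_div_iff₀ hb, hab, mul_pow]
  gcongr
  nlinarith [Real.sq_sqrt hb.le, Real.sqrt_nonneg a, Real.sqrt_nonneg b]

lemma le_one_of_mem_simplex {k : ℕ} {v : Fin k → ℝ} (hv : v ∈ simplex k) (j : Fin k) :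
    v j ≤ 1 :=
  hv.2 ▸ single_le_sum (fun i _ => hv.1 i) (mem_univ j)

lemma sum_abs_sub_le_two {k : ℕ} {u v : Fin k → ℝ} (hu : u ∈ simplex k) (hv : v ∈ simplex k) :
    ∑ j, |u j - v j| ≤ 2 :=
  calc ∑ j, |u j - v j| ≤ ∑ j, (u j + v j) :=
        sum_le_sum fun j _ => (abs_sub _ _).trans (by rw [abs_of_nonneg (hu.1 j),
          abs_of_nonneg (hv.1 j)])
    _ = 2 := by rw [sum_add_distrib, hu.2, hv.2]; norm_num

def sampleMean {n k : ℕ} (v : Fin n → Fin k → ℝ) : Fin k → ℝ :=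
  fun j => (1 / n : ℝ) * ∑ i, v i j

lemma sampleMean_mem_simplex {n k : ℕ} {v : Fin n → Fin k → ℝ} (hn : n ≠ 0)
    (hv : ∀ i, v i ∈ simplex k) : sampleMean v ∈ simplex k := by
  refine ⟨fun j => mul_nonneg (by positivity) (sum_nonneg fun i _ => (hv i).1 j), ?_⟩
  simp only [sampleMean, ← mul_sum]
  rw [sum_comm, sum_congr rfl fun i _ => (hv i).2]
  simp [hn]

lemma sum_abs_sampleMean_sub_le {n k : ℕ} {x y : Fin n → Fin k → ℝ}
    (hx : ∀ i, x i ∈ simplex k) (hy : ∀ i, y i ∈ simplex k) :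
    ∑ j, |sampleMean x j - sampleMean y j| ≤ 2 * #{i | x i ≠ y i} / n := by
  have hrow : ∀ i, ∑ j, |x i j - y i j| ≤ if x i ≠ y i then 2 else 0 := by
    intro i
    split_ifs with h
    · exact sum_abs_sub_le_two (hx i) (hy i)
    · simp [not_not.mp h]
  calc ∑ j, |sampleMean x j - sampleMean y j|
      = (1 / n : ℝ) * ∑ j, |∑ i, (x i j - y i j)| := by
        rw [mul_sum]
        refine sum_congr rfl fun j _ => ?_
        rw [sampleMean, sampleMean, ← mul_sub, ← sum_sub_distrib, abs_mul,
          abs_of_nonneg (by positivity)]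
    _ ≤ (1 / n : ℝ) * ∑ i, ∑ j, |x i j - y i j| := by
        rw [sum_comm]
        gcongr
        exact abs_sum_le_sum_abs _ _
    _ ≤ (1 / n : ℝ) * ∑ i, if x i ≠ y i then (2 : ℝ) else 0 := by
        gcongr with i; exact hrow i
    _ = 2 * #{i | x i ≠ y i} / n := by
        rw [← sum_filter, sum_const, nsmul_eq_mul]; ring

lemma sq_dH {k : ℕ} (u v : Fin k → ℝ) :
    dH u v ^ 2 = ∑ j, (√(u j) - √(v j)) ^ 2 :=
  Real.sq_sqrt (sum_nonneg fun _ _ => sq_nonneg _)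

lemma dH_nonneg {k : ℕ} (u v : Fin k → ℝ) : 0 ≤ dH u v :=
  Real.sqrt_nonneg _

lemma dH_eq_dist {k : ℕ} (u v : Fin k → ℝ) :
    dH u v = dist (WithLp.toLp 2 fun j => √(u j)) (WithLp.toLp 2 fun j => √(v j)) := by
  simp [dH, EuclideanSpace.dist_eq, Real.dist_eq, sq_abs]

lemma dH_triangle {k : ℕ} (u v w : Fin k → ℝ) : dH u w ≤ dH u v + dH v w := by
  simp only [dH_eq_dist]
  exact dist_triangle _ _ _

lemma continuous_dH {k : ℕ} : Continuous fun p : (Fin k → ℝ) × (Fin k → ℝ) => dH p.1 p.2 := by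
  unfold dH
  fun_prop

lemma dH_le_sqrt_sum_abs_sub {k : ℕ} {u v : Fin k → ℝ} (hu : ∀ j, 0 ≤ u j)
    (hv : ∀ j, 0 ≤ v j) : dH u v ≤ √(∑ j, |u j - v j|) :=
  Real.sqrt_le_sqrt (sum_le_sum fun j _ => sqrt_sub_sqrt_sq_le_abs_sub (hu j) (hv j))

lemma dH_le_sqrt_two {k : ℕ} {u v : Fin k → ℝ} (hu : u ∈ simplex k) (hv : v ∈ simplex k) :
    dH u v ≤ √2 :=
  (dH_le_sqrt_sum_abs_sub hu.1 hv.1).trans (Real.sqrt_le_sqrt (sum_abs_sub_le_two hu hv))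

lemma dH_sampleMean_le {n k : ℕ} {x y : Fin n → Fin k → ℝ}
    (hx : ∀ i, x i ∈ simplex k) (hy : ∀ i, y i ∈ simplex k) :
    dH (sampleMean x) (sampleMean y) ≤ √(2 * #{i | x i ≠ y i} / n) := by
  rcases Nat.eq_zero_or_pos n with rfl | hn
  · simp [dH, sampleMean]
  · exact (dH_le_sqrt_sum_abs_sub (sampleMean_mem_simplex hn.ne' hx).1
      (sampleMean_mem_simplex hn.ne' hy).1).trans
      (Real.sqrt_le_sqrt (sum_abs_sampleMean_sub_le hx hy))

section Probability

variable {Ω : Type*} [MeasurableSpace Ω] {μ : Measure Ω}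

lemma Measurable.sampleMean {n k : ℕ} {Y : Fin n → Ω → Fin k → ℝ} (hY : ∀ i, Measurable (Y i)) :
    Measurable fun ω => sampleMean fun i => Y i ω :=
  measurable_pi_lambda _ fun j =>
    (measurable_sum _ fun i _ => (measurable_pi_apply j).comp (hY i)).const_mul _

lemma Measurable.dH {k : ℕ} {f g : Ω → Fin k → ℝ} (hf : Measurable f) (hg : Measurable g) :
    Measurable fun ω => dH (f ω) (g ω) :=
  continuous_dH.measurable.comp (hf.prodMk hg)

lemma memLp_dH [IsFiniteMeasure μ] {k : ℕ} {f g : Ω → Fin k → ℝ} (hf : Measurable f)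
    (hg : Measurable g) (hf' : ∀ ω, f ω ∈ simplex k) (hg' : ∀ ω, g ω ∈ simplex k)
    (p : ENNReal) : MemLp (fun ω => dH (f ω) (g ω)) p μ :=
  .of_bound (hf.dH hg).aestronglyMeasurable _ <| ae_of_all _ fun ω => by
    rw [Real.norm_of_nonneg (dH_nonneg _ _)]; exact dH_le_sqrt_two (hf' ω) (hg' ω)

lemma integrable_dH [IsFiniteMeasure μ] {k : ℕ} {f g : Ω → Fin k → ℝ} (hf : Measurable f)
    (hg : Measurable g) (hf' : ∀ ω, f ω ∈ simplex k) (hg' : ∀ ω, g ω ∈ simplex k) :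
    Integrable (fun ω => dH (f ω) (g ω)) μ :=
  memLp_one_iff_integrable.mp (memLp_dH hf hg hf' hg' 1)

lemma memLp_of_nonneg_of_le_one [IsFiniteMeasure μ] {Z : Ω → ℝ} (hZ : AEStronglyMeasurable Z μ)
    (h0 : ∀ ω, 0 ≤ Z ω) (h1 : ∀ ω, Z ω ≤ 1) (p : ENNReal) : MemLp Z p μ :=
  .of_bound hZ 1 <| ae_of_all _ fun ω => by rw [Real.norm_of_nonneg (h0 ω)]; exact h1 ω

lemma integral_le_sqrt_integral_sq [IsProbabilityMeasure μ] {f : Ω → ℝ} (hf : MemLp f 2 μ) :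
    ∫ ω, f ω ∂μ ≤ √(∫ ω, f ω ^ 2 ∂μ) := by
  refine (le_abs_self _).trans (Real.abs_le_sqrt ?_)
  have := variance_nonneg f μ
  rw [variance_eq_sub hf] at this
  simpa using this

lemma variance_le_integral_of_nonneg_of_le_one [IsProbabilityMeasure μ] {Z : Ω → ℝ}
    (hZ : Measurable Z) (h0 : ∀ ω, 0 ≤ Z ω) (h1 : ∀ ω, Z ω ≤ 1) :
    variance Z μ ≤ ∫ ω, Z ω ∂μ := by
  refine (variance_le_expectation_sq hZ.aestronglyMeasurable).trans ?_
  refine integral_mono_of_nonneg (ae_of_all _ fun ω => sq_nonneg _)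
    (memLp_one_iff_integrable.mp (memLp_of_nonneg_of_le_one hZ.aestronglyMeasurable h0 h1 1))
    (ae_of_all _ fun ω => ?_)
  simp only [Pi.pow_apply]; nlinarith [h0 ω, h1 ω]

lemma variance_mean_le [IsProbabilityMeasure μ] {n : ℕ} {Z : Fin n → Ω → ℝ}
    (hZ : ∀ i, Measurable (Z i)) (hindep : iIndepFun Z μ) (h0 : ∀ i ω, 0 ≤ Z i ω)
    (h1 : ∀ i ω, Z i ω ≤ 1) {m : ℝ} (hm : ∀ i, ∫ ω, Z i ω ∂μ = m) :
    variance (fun ω => (1 / n : ℝ) * ∑ i, Z i ω) μ ≤ m / n := by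
  have hL2 : ∀ i, MemLp (Z i) 2 μ := fun i =>
    memLp_of_nonneg_of_le_one (hZ i).aestronglyMeasurable (h0 i) (h1 i) 2
  have hsum : variance (fun ω => ∑ i, Z i ω) μ = ∑ i, variance (Z i) μ := by
    rw [← IndepFun.variance_sum (fun i _ => hL2 i) fun i _ j _ hij => hindep.indepFun hij]
    congr 1; ext ω; simp
  calc variance (fun ω => (1 / n : ℝ) * ∑ i, Z i ω) μ
      = (1 / n : ℝ) ^ 2 * ∑ i, variance (Z i) μ := by rw [variance_const_mul, hsum]
    _ ≤ (1 / n : ℝ) ^ 2 * ∑ _i : Fin n, m := by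
        gcongr with i
        exact (hm i).symm ▸ variance_le_integral_of_nonneg_of_le_one (hZ i) (h0 i) (h1 i)
    _ = m / n := by
        rcases eq_or_ne (n : ℝ) 0 with hn | hn
        · simp [hn]
        · simp; field_simp

/-- For `∫ Z = 0` the bound reads `≤ 0` (division by zero), which holds as `(√Z)² = Z`. -/
lemma integral_sqrt_sub_sqrt_integral_sq_le [IsFiniteMeasure μ] {Z : Ω → ℝ} (hZ : MemLp Z 2 μ)
    (h0 : ∀ ω, 0 ≤ Z ω) :
    ∫ ω, (√(Z ω) - √(∫ ω', Z ω' ∂μ)) ^ 2 ∂μ ≤ variance Z μ / ∫ ω, Z ω ∂μ := by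
  have hm0 : 0 ≤ ∫ ω, Z ω ∂μ := integral_nonneg h0
  rcases hm0.eq_or_lt with hm | hm
  · rw [← hm, Real.sqrt_zero, div_zero]
    simp only [sub_zero, Real.sq_sqrt (h0 _)]
    exact hm.symm.le
  · rw [variance_eq_integral hZ.aemeasurable, ← integral_div]
    exact integral_mono_of_nonneg (ae_of_all _ fun _ => sq_nonneg _)
      ((hZ.sub (memLp_const _)).integrable_sq.div_const _)
      (ae_of_all _ fun ω => sqrt_sub_sqrt_sq_le_sq_div (h0 ω) hm)

lemma integral_sqrt_sampleMean_sub_sq_le [IsProbabilityMeasure μ] {n k : ℕ} (hn : n ≠ 0)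
    {Y : Fin n → Ω → Fin k → ℝ} (hYmeas : ∀ i, Measurable (Y i)) (hYindep : iIndepFun Y μ)
    (hYval : ∀ i ω, Y i ω ∈ simplex k) {θ : Fin k → ℝ} (hθ : θ ∈ simplex k)
    (hθmean : ∀ i j, ∫ ω, Y i ω j ∂μ = θ j) (j : Fin k) :
    ∫ ω, (√(sampleMean (Y · ω) j) - √(θ j)) ^ 2 ∂μ ≤ θ j / n / θ j := by
  have hYj_meas : ∀ i, Measurable fun ω => Y i ω j :=
    fun i => (measurable_pi_apply j).comp (hYmeas i)
  have hYj0 : ∀ i ω, 0 ≤ Y i ω j := fun i ω => (hYval i ω).1 j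
  have hYj1 : ∀ i ω, Y i ω j ≤ 1 := fun i ω => le_one_of_mem_simplex (hYval i ω) j
  have hmean_meas : Measurable fun ω => sampleMean (Y · ω) j :=
    (measurable_pi_apply j).comp (.sampleMean hYmeas)
  have hmean_val : ∀ ω, sampleMean (Y · ω) ∈ simplex k :=
    fun ω => sampleMean_mem_simplex hn (hYval · ω)
  have hmean_integral : ∫ ω, sampleMean (Y · ω) j ∂μ = θ j := by
    simp only [sampleMean]
    rw [integral_const_mul, integral_finsetSum _ fun i _ => memLp_one_iff_integrable.mp
      (memLp_of_nonneg_of_le_one (μ := μ) (hYj_meas i).aestronglyMeasurable (hYj0 i) (hYj1 i) 1)]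
    simp [hθmean, hn]
  have hvar : variance (fun ω => sampleMean (Y · ω) j) μ ≤ θ j / n :=
    variance_mean_le hYj_meas (hYindep.comp (fun _ v => v j) fun _ => measurable_pi_apply j)
      hYj0 hYj1 (hθmean · j)
  have := integral_sqrt_sub_sqrt_integral_sq_le
    (memLp_of_nonneg_of_le_one (μ := μ) hmean_meas.aestronglyMeasurable (fun ω => (hmean_val ω).1 j)
      (fun ω => le_one_of_mem_simplex (hmean_val ω) j) 2) fun ω => (hmean_val ω).1 j
  rw [hmean_integral] at this
  exact this.trans (div_le_div_of_nonneg_right hvar (hθ.1 j))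

lemma integral_dH_sampleMean_le [IsProbabilityMeasure μ] {n k : ℕ} (hn : n ≠ 0)
    {Y : Fin n → Ω → Fin k → ℝ} (hYmeas : ∀ i, Measurable (Y i)) (hYindep : iIndepFun Y μ)
    (hYval : ∀ i ω, Y i ω ∈ simplex k) {θ : Fin k → ℝ} (hθ : θ ∈ simplex k)
    (hθmean : ∀ i j, ∫ ω, Y i ω j ∂μ = θ j) :
    ∫ ω, dH (sampleMean (Y · ω)) θ ∂μ ≤ √(#{j | θ j ≠ 0} / n) := by
  have hmean_meas : Measurable fun ω => sampleMean (Y · ω) := .sampleMean hYmeas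
  have hmean_val : ∀ ω, sampleMean (Y · ω) ∈ simplex k :=
    fun ω => sampleMean_mem_simplex hn (hYval · ω)
  have hcoord_int : ∀ j, Integrable (fun ω => (√(sampleMean (Y · ω) j) - √(θ j)) ^ 2) μ := by
    intro j
    have hmeas : Measurable fun ω => (√(sampleMean (Y · ω) j) - √(θ j)) ^ 2 :=
      ((measurable_pi_apply j).comp hmean_meas).sqrt.sub_const _ |>.pow_const 2
    refine memLp_one_iff_integrable.mp <| memLp_of_nonneg_of_le_one hmeas.aestronglyMeasurable
      (fun _ => sq_nonneg _) (fun ω => ?_) 1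
    refine (sqrt_sub_sqrt_sq_le_abs_sub ((hmean_val ω).1 j) (hθ.1 j)).trans (abs_sub_le_iff.2 ?_)
    constructor <;> linarith [(hmean_val ω).1 j, le_one_of_mem_simplex (hmean_val ω) j, hθ.1 j,
      le_one_of_mem_simplex hθ j]
  calc ∫ ω, dH (sampleMean (Y · ω)) θ ∂μ ≤ √(∫ ω, dH (sampleMean (Y · ω)) θ ^ 2 ∂μ) :=
        integral_le_sqrt_integral_sq <|
          memLp_dH hmean_meas measurable_const hmean_val (fun _ => hθ) 2
    _ = √(∑ j, ∫ ω, (√(sampleMean (Y · ω) j) - √(θ j)) ^ 2 ∂μ) := by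
        simp only [sq_dH]; rw [integral_finsetSum _ fun j _ => hcoord_int j]
    _ ≤ √(∑ j, θ j / n / θ j) := Real.sqrt_le_sqrt <| sum_le_sum fun j _ =>
        integral_sqrt_sampleMean_sub_sq_le hn hYmeas hYindep hYval hθ hθmean j
    _ = √(#{j | θ j ≠ 0} / n) := by
        simp_rw [div_right_comm _ (n : ℝ), ← sum_div, natCast_card_filter]
        congr 3 with j
        split_ifs with h <;> simp_all

end Probability

theorem sample_mean_Hellinger_risk_adversarial_general
    {Ω : Type} [MeasurableSpace Ω] (μ : Measure Ω) [IsProbabilityMeasure μ]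
    (k s n : ℕ) (hn : 1 ≤ n)
    (ε : ℝ) (hε0 : 0 ≤ ε)
    (Y X : Fin n → Ω → Fin k → ℝ)
    (hYmeas : ∀ i, Measurable (Y i)) (hXmeas : ∀ i, Measurable (X i))
    (hYindep : iIndepFun Y μ)
    (hYval : ∀ i ω, Y i ω ∈ simplex k)
    (hXval : ∀ i ω, X i ω ∈ simplex k)
    (θ : Fin k → ℝ) (hθ : θ ∈ simplex k) (hθsparse : sparse s θ)
    (hθmean : ∀ i j, ∫ ω, Y i ω j ∂μ = θ j)
    (hcontam : ∀ᵐ ω ∂μ,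
      ((Finset.univ.filter fun i => X i ω ≠ Y i ω).card : ℝ) ≤ ε * n) :
    ∫ ω, dH (fun j => (1 / n : ℝ) * ∑ i, X i ω j) θ ∂μ ≤
      Real.sqrt (s / n) + 2 * Real.sqrt ε := by
  have hn' : n ≠ 0 := Nat.one_le_iff_ne_zero.mp hn
  set Xbar := fun ω => sampleMean fun i => X i ω
  set Ybar := fun ω => sampleMean fun i => Y i ω
  have hXbar : ∀ ω, Xbar ω ∈ simplex k := fun ω => sampleMean_mem_simplex hn' (hXval · ω)
  have hYbar : ∀ ω, Ybar ω ∈ simplex k := fun ω => sampleMean_mem_simplex hn' (hYval · ω)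
  have hclean_int := integrable_dH (μ := μ) (.sampleMean hYmeas) measurable_const hYbar fun _ => hθ
  have hcontam_int := integrable_dH (μ := μ) (.sampleMean hXmeas) (.sampleMean hYmeas) hXbar hYbar
  have hclean : ∫ ω, dH (Ybar ω) θ ∂μ ≤ √(s / n) :=
    (integral_dH_sampleMean_le hn' hYmeas hYindep hYval hθ hθmean).trans <|
      Real.sqrt_le_sqrt <| div_le_div_of_nonneg_right (by exact_mod_cast hθsparse) n.cast_nonneg
  have hcontam' : ∀ᵐ ω ∂μ, dH (Xbar ω) (Ybar ω) ≤ 2 * √ε := hcontam.mono fun ω hω => by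
    refine (dH_sampleMean_le (hXval · ω) (hYval · ω)).trans ?_
    have : (#{i | X i ω ≠ Y i ω} : ℝ) / n ≤ ε := (div_le_iff₀ (by positivity)).mpr hω
    rw [show 2 * √ε = √(2 ^ 2 * ε) by simp [Real.sqrt_mul], mul_div_assoc]
    exact Real.sqrt_le_sqrt (by linarith)
  calc ∫ ω, dH (Xbar ω) θ ∂μ ≤ ∫ ω, (dH (Ybar ω) θ + dH (Xbar ω) (Ybar ω)) ∂μ :=
        integral_mono_of_nonneg (ae_of_all _ fun ω => dH_nonneg _ _) (hclean_int.add hcontam_int)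
          (ae_of_all _ fun ω => (dH_triangle _ (Ybar ω) _).trans_eq (add_comm _ _))
    _ = ∫ ω, dH (Ybar ω) θ ∂μ + ∫ ω, dH (Xbar ω) (Ybar ω) ∂μ := integral_add hclean_int hcontam_int
    _ ≤ √(s / n) + 2 * √ε := by
        gcongr
        simpa using integral_mono_ae hcontam_int (integrable_const _) hcontam'

/-- In the adversarial contamination setup, the sample mean satisfies
`E[d_H(X̄_n, θ*)] ≤ (s/n)^{1/2} + 2·ε^{1/2}`. -/
theorem sample_mean_Hellinger_risk_adversarial
    {Ω : Type} [MeasurableSpace Ω] (μ : Measure Ω) [IsProbabilityMeasure μ]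
    (k s n : ℕ) (hk : 1 ≤ k) (hs1 : 1 ≤ s) (hsk : s ≤ k) (hn : 1 ≤ n)
    (ε : ℝ) (hε0 : 0 ≤ ε) (hε1 : ε ≤ 1)
    (Y X : Fin n → Ω → Fin k → ℝ)
    (hYmeas : ∀ i, Measurable (Y i)) (hXmeas : ∀ i, Measurable (X i))
    (hYindep : iIndepFun Y μ)
    (hYid : ∀ i j, IdentDistrib (Y i) (Y j) μ μ)
    (hYval : ∀ i ω, Y i ω ∈ simplex k)
    (hXval : ∀ i ω, X i ω ∈ simplex k)
    (θ : Fin k → ℝ) (hθ : θ ∈ simplex k) (hθsparse : sparse s θ)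
    (hθmean : ∀ i j, ∫ ω, Y i ω j ∂μ = θ j)
    (hcontam : ∀ᵐ ω ∂μ,
      ((Finset.univ.filter fun i => X i ω ≠ Y i ω).card : ℝ) ≤ ε * n) :
    ∫ ω, dH (fun j => (1 / n : ℝ) * ∑ i, X i ω j) θ ∂μ ≤
      Real.sqrt (s / n) + 2 * Real.sqrt ε :=
  sample_mean_Hellinger_risk_adversarial_general μ k s n hn ε hε0 Y X hYmeas hXmeas hYindep hYval
    hXval θ hθ hθsparse hθmean hcontam
end
end

section
/- Let Y_1,…,Y_n be i.i.d. random vectors taking values in the probability simplex Δ^{k-1} whose mean θ* = E[Y_1] has at most s nonzero coordinates, and let Ȳ_n := (1/n) Σ_{i=1}^n Y_i. Then E[d_TV(Ȳ_n, θ*)] ≤ (1/2) (s/n)^{1/2}. -/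
open MeasureTheory ProbabilityTheory

noncomputable section

/-- Total variation distance between two points of the simplex. -/
def dTV {k : ℕ} (u v : Fin k → ℝ) : ℝ := (1 / 2) * ∑ j, |u j - v j|

/-! Coordinatewise, `Ȳ_j` averages `n` independent `[0,1]`-valued variables of mean `θ_j`, so
by the Bhatia–Davis inequality its variance is at most `θ_j (1 - θ_j) / n ≤ θ_j / n`, and
`E|Ȳ_j - θ_j| ≤ √(θ_j / n)`. Only the `s` coordinates with `θ_j ≠ 0` contribute, and by
Cauchy–Schwarz `∑_j √θ_j ≤ √(s ∑_j θ_j) = √s`. -/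

open Finset

lemma apply_mem_Icc_of_mem_simplex {k : ℕ} {v : Fin k → ℝ} (hv : v ∈ simplex k) (j : Fin k) :
    v j ∈ Set.Icc 0 1 :=
  ⟨hv.1 j, hv.2 ▸ single_le_sum (fun i _ => hv.1 i) (mem_univ j)⟩

lemma sum_sqrt_le_sqrt_mul_sum_of_sparse {k s : ℕ} {v : Fin k → ℝ} (hv : ∀ j, 0 ≤ v j)
    (hs : sparse s v) :
    ∑ j, √(v j) ≤ √(s * ∑ j, v j) := by
  set S := univ.filter fun j => v j ≠ 0
  calc ∑ j, √(v j) = ∑ j ∈ S, √(v j) :=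
        (sum_filter_of_ne fun j _ hj => by contrapose! hj; simp [hj]).symm
    _ = ∑ j ∈ S, √1 * √(v j) := by simp
    _ ≤ √(∑ _j ∈ S, 1) * √(∑ j ∈ S, v j) :=
        Real.sum_sqrt_mul_sqrt_le S (fun _ => zero_le_one) hv
    _ ≤ √s * √(∑ j, v j) := by
        gcongr
        · simpa using (show (#S : ℝ) ≤ s by exact_mod_cast hs)
        · exact fun j _ _ => hv j
        · exact subset_univ S
    _ = √(s * ∑ j, v j) := (Real.sqrt_mul (Nat.cast_nonneg s) _).symm

section Probability

variable {Ω : Type*} [MeasurableSpace Ω] {μ : Measure Ω}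

lemma integrable_apply_of_mem_simplex [IsFiniteMeasure μ] {k : ℕ} {Y : Ω → Fin k → ℝ}
    (hY : AEMeasurable Y μ) (hYval : ∀ ω, Y ω ∈ simplex k) (j : Fin k) :
    Integrable (fun ω => Y ω j) μ :=
  Integrable.of_mem_Icc 0 1 ((measurable_pi_apply j).comp_aemeasurable hY)
    (ae_of_all _ fun ω => apply_mem_Icc_of_mem_simplex (hYval ω) j)

lemma integral_mem_simplex [IsProbabilityMeasure μ] {k : ℕ} {Y : Ω → Fin k → ℝ}
    (hY : AEMeasurable Y μ) (hYval : ∀ ω, Y ω ∈ simplex k) :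
    (fun j => ∫ ω, Y ω j ∂μ) ∈ simplex k := by
  refine ⟨fun j => integral_nonneg fun ω => (hYval ω).1 j, ?_⟩
  rw [← integral_finsetSum _ fun j _ => integrable_apply_of_mem_simplex hY hYval j]
  simp [(hYval _).2]

lemma integral_abs_sub_integral_le_sqrt_variance [IsProbabilityMeasure μ] {X : Ω → ℝ}
    (hX : MemLp X 2 μ) :
    ∫ ω, |X ω - μ[X]| ∂μ ≤ √(Var[X; μ]) := by
  set W : Ω → ℝ := fun ω => |X ω - μ[X]|
  have hW : MemLp W 2 μ := (hX.sub (memLp_const _)).abs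
  have hW2 : μ[W ^ 2] = Var[X; μ] := by
    simp only [W, Pi.pow_apply, sq_abs]
    exact (variance_eq_integral hX.aemeasurable).symm
  apply Real.le_sqrt_of_sq_le
  have := variance_nonneg W μ
  rw [variance_eq_sub hW, hW2] at this
  linarith

lemma variance_le_integral_of_mem_Icc_zero_one [IsProbabilityMeasure μ] {X : Ω → ℝ}
    (hX : AEMeasurable X μ) (h01 : ∀ᵐ ω ∂μ, X ω ∈ Set.Icc 0 1) :
    Var[X; μ] ≤ μ[X] := by
  calc Var[X; μ] ≤ (1 - μ[X]) * (μ[X] - 0) := variance_le_sub_mul_sub h01 hX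
    _ ≤ μ[X] := by nlinarith [sq_nonneg μ[X]]

lemma variance_sampleMean_le {n : ℕ} {X : Fin n → Ω → ℝ} (hX : ∀ i, MemLp (X i) 2 μ)
    (hindep : Pairwise fun i j => X i ⟂ᵢ[μ] X j) {v : ℝ} (hv : ∀ i, Var[X i; μ] ≤ v) :
    Var[fun ω => (1 / n : ℝ) * ∑ i, X i ω; μ] ≤ v / n := by
  have hsum : Var[fun ω => ∑ i, X i ω; μ] = ∑ i, Var[X i; μ] := by
    rw [← IndepFun.variance_sum (fun i _ => hX i) fun i _ j _ hij => hindep hij]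
    congr 1
    ext ω
    simp
  calc Var[fun ω => (1 / n : ℝ) * ∑ i, X i ω; μ] = (1 / n : ℝ) ^ 2 * ∑ i, Var[X i; μ] := by
        rw [variance_const_mul, hsum]
    _ ≤ (1 / n : ℝ) ^ 2 * ∑ _i : Fin n, v := by gcongr with i; exact hv i
    _ = v / n := by
        rw [sum_const, card_univ, Fintype.card_fin, nsmul_eq_mul]
        field_simp

lemma integral_abs_sampleMean_sub_le_sqrt [IsProbabilityMeasure μ] {n : ℕ} (hn : n ≠ 0)
    {Z : Fin n → Ω → ℝ} (hZ : ∀ i, AEMeasurable (Z i) μ)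
    (hindep : Pairwise fun i j => Z i ⟂ᵢ[μ] Z j) (h01 : ∀ i, ∀ᵐ ω ∂μ, Z i ω ∈ Set.Icc 0 1)
    {m : ℝ} (hmean : ∀ i, μ[Z i] = m) :
    ∫ ω, |(1 / n : ℝ) * ∑ i, Z i ω - m| ∂μ ≤ √(m / n) := by
  have hZ2 : ∀ i, MemLp (Z i) 2 μ := fun i =>
    memLp_of_bounded (h01 i) (hZ i).aestronglyMeasurable 2
  set X : Ω → ℝ := fun ω => (1 / n : ℝ) * ∑ i, Z i ω
  have hX2 : MemLp X 2 μ := (memLp_finsetSum univ fun i _ => hZ2 i).const_mul _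
  have hXmean : μ[X] = m := by
    rw [integral_const_mul, integral_finsetSum _ fun i _ => (hZ2 i).integrable one_le_two]
    simp only [hmean, sum_const, card_univ, Fintype.card_fin, nsmul_eq_mul]
    field_simp
  have hvar : Var[X; μ] ≤ m / n := variance_sampleMean_le hZ2 hindep fun i =>
    (variance_le_integral_of_mem_Icc_zero_one (hZ i) (h01 i)).trans_eq (hmean i)
  calc ∫ ω, |X ω - m| ∂μ = ∫ ω, |X ω - μ[X]| ∂μ := by rw [hXmean]
    _ ≤ √(Var[X; μ]) := integral_abs_sub_integral_le_sqrt_variance hX2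
    _ ≤ √(m / n) := Real.sqrt_le_sqrt hvar

lemma integral_dTV [IsFiniteMeasure μ] {k : ℕ} {U : Ω → Fin k → ℝ}
    (hU : ∀ j, Integrable (fun ω => U ω j) μ) (v : Fin k → ℝ) :
    ∫ ω, dTV (U ω) v ∂μ = 1 / 2 * ∑ j, ∫ ω, |U ω j - v j| ∂μ := by
  have hdev : ∀ j, Integrable (fun ω => |U ω j - v j|) μ := fun j =>
    ((hU j).sub (integrable_const _)).abs
  simp only [dTV]
  rw [integral_const_mul, integral_finsetSum _ fun j _ => hdev j]

end Probability

theorem sample_mean_TV_risk_iid_general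
    {Ω : Type} [MeasurableSpace Ω] (μ : Measure Ω) [IsProbabilityMeasure μ]
    (k s n : ℕ) (hn : 1 ≤ n)
    (Y : Fin n → Ω → Fin k → ℝ)
    (hYmeas : ∀ i, Measurable (Y i))
    (hYindep : iIndepFun Y μ)
    (hYval : ∀ i ω, Y i ω ∈ simplex k)
    (θ : Fin k → ℝ) (hθmean : ∀ i j, ∫ ω, Y i ω j ∂μ = θ j)
    (hθsparse : sparse s θ) :
    ∫ ω, dTV (fun j => (1 / n : ℝ) * ∑ i, Y i ω j) θ ∂μ ≤
      (1 / 2) * Real.sqrt (s / n) := by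
  have hθ : θ ∈ simplex k := by
    simpa only [hθmean ⟨0, hn⟩] using
      integral_mem_simplex (μ := μ) (hYmeas ⟨0, hn⟩).aemeasurable (hYval ⟨0, hn⟩)
  have hcoord : ∀ j, ∫ ω, |(1 / n : ℝ) * ∑ i, Y i ω j - θ j| ∂μ ≤ √(θ j / n) := fun j =>
    integral_abs_sampleMean_sub_le_sqrt (by omega)
      (fun i => ((measurable_pi_apply j).comp (hYmeas i)).aemeasurable)
      (fun i i' hii' =>
        (hYindep.indepFun hii').comp (measurable_pi_apply j) (measurable_pi_apply j))
      (fun i => ae_of_all _ fun ω => apply_mem_Icc_of_mem_simplex (hYval i ω) j)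
      (fun i => hθmean i j)
  rw [integral_dTV fun j => (integrable_finsetSum _ fun i _ =>
    integrable_apply_of_mem_simplex (hYmeas i).aemeasurable (hYval i) j).const_mul _]
  calc 1 / 2 * ∑ j, ∫ ω, |(1 / n : ℝ) * ∑ i, Y i ω j - θ j| ∂μ
      ≤ 1 / 2 * ∑ j, √(θ j / n) := by gcongr with j; exact hcoord j
    _ = 1 / 2 * ((∑ j, √(θ j)) / √n) := by
        simp only [Real.sqrt_div' _ (Nat.cast_nonneg n), sum_div]
    _ ≤ 1 / 2 * (√s / √n) := by
        gcongr
        simpa [hθ.2] using sum_sqrt_le_sqrt_mul_sum_of_sparse hθ.1 hθsparse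
    _ = 1 / 2 * √(s / n) := by rw [Real.sqrt_div' _ (Nat.cast_nonneg n)]

/-- For i.i.d. simplex-valued observations with an `s`-sparse mean,
`E[d_TV(Ȳ_n, θ*)] ≤ (1/2)·(s/n)^{1/2}`. -/
theorem sample_mean_TV_risk_iid
    {Ω : Type} [MeasurableSpace Ω] (μ : Measure Ω) [IsProbabilityMeasure μ]
    (k s n : ℕ) (hk : 1 ≤ k) (hn : 1 ≤ n)
    (Y : Fin n → Ω → Fin k → ℝ)
    (hYmeas : ∀ i, Measurable (Y i))
    (hYindep : iIndepFun Y μ)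
    (hYid : ∀ i j, IdentDistrib (Y i) (Y j) μ μ)
    (hYval : ∀ i ω, Y i ω ∈ simplex k)
    (θ : Fin k → ℝ) (hθmean : ∀ i j, ∫ ω, Y i ω j ∂μ = θ j)
    (hθsparse : sparse s θ) :
    ∫ ω, dTV (fun j => (1 / n : ℝ) * ∑ i, Y i ω j) θ ∂μ ≤
      (1 / 2) * Real.sqrt (s / n) :=
  sample_mean_TV_risk_iid_general μ k s n hn Y hYmeas hYindep hYval θ hθmean hθsparse
end
end
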